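/- arXiv:1206.0500 — 2 statements merged into one kernel-verified Lean document; each statement's English description precedes it below -/
import Mathlib

section
/- With P₀, P₁ as in the Baum formula and M₀ := P₀ + P₁, M₁ := P₁, M₂ := 𝟙·π (the 2×2 matrix whose rows are both π), for every binary string v of length n the moment m_v := ∑_{w ≥ v} p_w (sum over binary strings w dominating v coordinatewise, where p_w is the HMM probability of w) equals trace(M₂ · M_{v₁} · M_{v₂} ⋯ M_{v_n}). -/
open Matrix BigOperators

/-- `(P i) j k = E j i * T j k`. -/
noncomputable def Pmat (T E : Matrix (Fin 2) (Fin 2) ℂ) (i : Fin 2) :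
    Matrix (Fin 2) (Fin 2) ℂ :=
  Matrix.of fun j k => E j i * T j k

/-- Baum probability `p_w = π P_{w₁} ⋯ P_{w_n} 𝟙`. -/
noncomputable def baumProb (π : Fin 2 → ℂ) (T E : Matrix (Fin 2) (Fin 2) ℂ)
    {n : ℕ} (w : Fin n → Fin 2) : ℂ :=
  (π ᵥ* (List.ofFn fun i : Fin n => Pmat T E (w i)).prod) ⬝ᵥ (fun _ : Fin 2 => 1)

/-- `M₀ = P₀ + P₁`, `M₁ = P₁`. -/
noncomputable def Mmat (T E : Matrix (Fin 2) (Fin 2) ℂ) : Fin 2 → Matrix (Fin 2) (Fin 2) ℂ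
  | 0 => Pmat T E 0 + Pmat T E 1
  | 1 => Pmat T E 1

/-- `M₂ = 𝟙·π`, the 2×2 matrix whose rows are both `π`. -/
noncomputable def M2mat (π : Fin 2 → ℂ) : Matrix (Fin 2) (Fin 2) ℂ :=
  Matrix.of fun _ j => π j

lemma Mmat_eq_sum (T E : Matrix (Fin 2) (Fin 2) ℂ) (a : Fin 2) :
    Mmat T E a = ∑ b ∈ Finset.univ.filter (fun b : Fin 2 => a ≤ b), Pmat T E b := by
  fin_cases a
  · show Mmat T E 0 = ∑ b ∈ Finset.univ.filter (fun b : Fin 2 => (0 : Fin 2) ≤ b), Pmat T E b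
    rw [Finset.filter_true_of_mem (fun b _ => Fin.zero_le b), Fin.sum_univ_two]
    rfl
  · show Mmat T E 1 = ∑ b ∈ Finset.univ.filter (fun b : Fin 2 => (1 : Fin 2) ≤ b), Pmat T E b
    rw [show Finset.filter (fun b : Fin 2 => (1 : Fin 2) ≤ b) Finset.univ = {1} by decide]
    simp [Mmat]

lemma key (T E : Matrix (Fin 2) (Fin 2) ℂ) :
    ∀ (n : ℕ) (v : Fin n → Fin 2),
      ∑ w ∈ Finset.univ.filter (fun w : Fin n → Fin 2 => ∀ i, v i ≤ w i),
        (List.ofFn fun i : Fin n => Pmat T E (w i)).prod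
      = (List.ofFn fun i : Fin n => Mmat T E (v i)).prod := by
  intro n
  induction n with
  | zero => intro v; simp
  | succ n ih =>
    intro v
    rw [show (List.ofFn fun i : Fin (n+1) => Mmat T E (v i)).prod
        = Mmat T E (v 0) * (List.ofFn fun i : Fin n => Mmat T E (v i.succ)).prod by
      rw [List.ofFn_succ, List.prod_cons]]
    rw [← ih (fun i => v i.succ), Mmat_eq_sum, Finset.sum_mul_sum]
    rw [Finset.sum_filter]
    rw [← Fintype.sum_equiv (Fin.consEquiv (fun _ : Fin (n+1) => Fin 2))
      (fun p : Fin 2 × (Fin n → Fin 2) =>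
        if (v 0 ≤ p.1 ∧ ∀ i : Fin n, v i.succ ≤ p.2 i) then
          Pmat T E p.1 * (List.ofFn fun i : Fin n => Pmat T E (p.2 i)).prod else 0)
      (fun w => if (∀ i, v i ≤ w i) then (List.ofFn fun i => Pmat T E (w i)).prod else 0)
      (by
        rintro ⟨a, t⟩
        simp only [Fin.consEquiv_apply, Fin.forall_fin_succ, Fin.cons_zero, Fin.cons_succ,
          List.ofFn_succ, List.prod_cons])]
    rw [Fintype.sum_prod_type, Finset.sum_filter]
    refine Finset.sum_congr rfl fun a _ => ?_
    by_cases h : v 0 ≤ a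
    · simp [h, Finset.sum_filter]
    · simp [h]

lemma trace_lemma (π : Fin 2 → ℂ) (A : Matrix (Fin 2) (Fin 2) ℂ) :
    (π ᵥ* A) ⬝ᵥ (fun _ : Fin 2 => 1) = Matrix.trace (M2mat π * A) := by
  simp only [Matrix.trace, Matrix.diag, Matrix.mul_apply, M2mat, Matrix.of_apply,
    Matrix.vecMul, dotProduct, mul_one]

/-- **Baum formula for moments.** The moment `m_v = ∑_{w ≥ v} p_w` (sum over binary
strings `w` dominating `v` coordinatewise) equals `trace (M₂ · M_{v₁} ⋯ M_{v_n})`. -/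
theorem baum_formula_for_moments (π : Fin 2 → ℂ) (T E : Matrix (Fin 2) (Fin 2) ℂ)
    (hπ : π 0 + π 1 = 1)
    (hT : ∀ j, T j 0 + T j 1 = 1)
    (hE : ∀ j, E j 0 + E j 1 = 1)
    (n : ℕ) (v : Fin n → Fin 2) :
    ∑ w ∈ Finset.univ.filter (fun w : Fin n → Fin 2 => ∀ i, v i ≤ w i),
        baumProb π T E w =
      Matrix.trace (M2mat π * (List.ofFn fun i : Fin n => Mmat T E (v i)).prod) := by
  rw [← key T E n v, Finset.mul_sum, Matrix.trace_sum]
  exact Finset.sum_congr rfl fun w _ => trace_lemma π _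
end

section
/- Let ŷθ be the parameter point with π̂ = (−1/8, 9/8), T̂ = [[3/4,1/4],[1/4,3/4]], Ê = [[3/4,1/4],[1/4,3/4]]. Then all eight probabilities p_v (v ∈ {0,1}³) computed via the HMM formula p_v = ∑_h π̂_{h₁}Ê_{h₁,v₁}T̂_{h₁h₂}Ê_{h₂,v₂}T̂_{h₂h₃}Ê_{h₃,v₃} are non-negative real numbers summing to 1, even though π̂ has a negative entry. -/
open Matrix BigOperators

/-- `π̂ = (−1/8, 9/8)`. -/
noncomputable def pihat : Fin 2 → ℝ := ![-(1/8 : ℝ), 9/8]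

/-- `T̂ = [[3/4,1/4],[1/4,3/4]]`. -/
noncomputable def That : Matrix (Fin 2) (Fin 2) ℝ := !![3/4, 1/4; 1/4, 3/4]

/-- `Ê = [[3/4,1/4],[1/4,3/4]]`. -/
noncomputable def Ehat : Matrix (Fin 2) (Fin 2) ℝ := !![3/4, 1/4; 1/4, 3/4]

/-- The length-3 HMM probability of `v` under `(π̂, T̂, Ê)`. -/
noncomputable def phat (v : Fin 3 → Fin 2) : ℝ :=
  ∑ h : Fin 3 → Fin 2,
    pihat (h 0) * Ehat (h 0) (v 0) * That (h 0) (h 1) * Ehat (h 1) (v 1) *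
      That (h 1) (h 2) * Ehat (h 2) (v 2)

lemma sum_pi3 (f : (Fin 3 → Fin 2) → ℝ) : ∑ h, f h = ∑ a, ∑ b, ∑ c, f ![a,b,c] := by
  rw [show (∑ a, ∑ b, ∑ c, f ![a,b,c]) = ∑ p : Fin 2 × Fin 2 × Fin 2, f ![p.1, p.2.1, p.2.2] by
    rw [Fintype.sum_prod_type]
    exact Finset.sum_congr rfl fun a _ => (Fintype.sum_prod_type fun y => f ![a, y.1, y.2]).symm]
  apply Fintype.sum_equiv (Equiv.symm ⟨fun p : Fin 2 × Fin 2 × Fin 2 => ![p.1, p.2.1, p.2.2],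
    fun h => (h 0, h 1, h 2), fun p => by simp, fun h => by funext i; fin_cases i <;> rfl⟩)
  intro h
  congr 1
  funext i; fin_cases i <;> rfl

/-- Although `π̂` has a negative entry, all eight probabilities `p_v` are non-negative
and they sum to 1: `(π̂, T̂, Ê)` maps into the probability simplex. -/
theorem nonneg_distribution_from_nonstochastic_params :
    (∀ v : Fin 3 → Fin 2, 0 ≤ phat v) ∧ ∑ v : Fin 3 → Fin 2, phat v = 1 := by
  have key : ∀ v : Fin 3 → Fin 2, phat v = ∑ a, ∑ b, ∑ c,
      pihat a * Ehat a (v 0) * That a b * Ehat b (v 1) * That b c * Ehat c (v 2) := by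
    intro v
    rw [phat, sum_pi3]
    rfl
  constructor
  · intro v
    rw [key]
    have two : ∀ x : Fin 2, x = 0 ∨ x = 1 := by decide
    rcases two (v 0) with h0|h0 <;> rcases two (v 1) with h1|h1 <;>
      rcases two (v 2) with h2|h2 <;> rw [h0, h1, h2] <;>
      · simp only [pihat, That, Ehat, Fin.sum_univ_two, Matrix.cons_val_zero, Matrix.cons_val_one,
          Matrix.head_cons, Matrix.cons_val', Matrix.cons_val_fin_one, Matrix.empty_val',
          Matrix.of_apply, Matrix.head_fin_const]
        norm_num
  · rw [sum_pi3]
    simp only [key]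
    simp [pihat, That, Ehat, Fin.sum_univ_two]
    norm_num
end
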